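/- arXiv:1508.02314 — 5 statements merged into one kernel-verified Lean document; each statement's English description precedes it below -/
import Mathlib

section
/- Let x1,...,x5 be invertible elements of the Laurent polynomial ring Z[x1^{±1},...,x5^{±1}], and define yi = (x_{i+1} + x_{i-1})/x_i with indices mod 5. Then y1*y2*y3*y4*y5 - y1*y2*y3 - y1*y2*y5 - y2*y3*y4 - y3*y4*y5 - y1*y4*y5 + y1 + y2 + y3 + y4 + y5 = 2. -/
/-- The Laurent polynomial ring `ℤ[x₁^{±1},...,xₙ^{±1}]`. -/
abbrev MvLaurent (n : ℕ) : Type := AddMonoidAlgebra ℤ (Fin n →₀ ℤ)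

/-!
Multiplying by the unit `x1 * x2 * x3 * x4 * x5` clears all denominators: each monomial
`y_S * x1 ⋯ x5` becomes `∏_{i ∈ S} (y_i x_i) * ∏_{j ∉ S} x_j`, and substituting
`y_i x_i = x_{i-1} + x_{i+1}` turns the left-hand side into the polynomial `2 * x1 ⋯ x5`.
-/

theorem cycle_relation_five_mul_prod {R : Type*} [CommRing R] (x1 x2 x3 x4 x5 y1 y2 y3 y4 y5 : R)
    (h1 : y1 * x1 = x2 + x5) (h2 : y2 * x2 = x3 + x1) (h3 : y3 * x3 = x4 + x2)
    (h4 : y4 * x4 = x5 + x3) (h5 : y5 * x5 = x1 + x4) :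
    (y1 * y2 * y3 * y4 * y5 - y1 * y2 * y3 - y1 * y2 * y5 - y2 * y3 * y4 - y3 * y4 * y5
      - y1 * y4 * y5 + y1 + y2 + y3 + y4 + y5) * (x1 * x2 * x3 * x4 * x5)
      = 2 * (x1 * x2 * x3 * x4 * x5) := by
  grind

theorem cycle_relation_five_of_units {R : Type*} [CommRing R] (x1 x2 x3 x4 x5 : Rˣ)
    (y1 y2 y3 y4 y5 : R)
    (hy1 : y1 = (x2 + x5 : R) * ↑x1⁻¹) (hy2 : y2 = (x3 + x1 : R) * ↑x2⁻¹)
    (hy3 : y3 = (x4 + x2 : R) * ↑x3⁻¹) (hy4 : y4 = (x5 + x3 : R) * ↑x4⁻¹)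
    (hy5 : y5 = (x1 + x4 : R) * ↑x5⁻¹) :
    y1 * y2 * y3 * y4 * y5 - y1 * y2 * y3 - y1 * y2 * y5 - y2 * y3 * y4 - y3 * y4 * y5
      - y1 * y4 * y5 + y1 + y2 + y3 + y4 + y5 = 2 := by
  apply (x1 * x2 * x3 * x4 * x5).isUnit.mul_left_injective
  push_cast
  apply cycle_relation_five_mul_prod <;> simp [hy1, hy2, hy3, hy4, hy5]

/-- For invertible elements `x1,...,x5` of `ℤ[x₁^{±1},...,x₅^{±1}]` and
`yᵢ = (x_{i+1} + x_{i-1})/xᵢ` (indices mod 5), we have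
`y1*y2*y3*y4*y5 - y1*y2*y3 - y1*y2*y5 - y2*y3*y4 - y3*y4*y5 - y1*y4*y5 + y1 + y2 + y3 + y4 + y5 = 2`. -/
theorem cycle_relation_five
    (x1 x2 x3 x4 x5 : (MvLaurent 5)ˣ)
    (y1 y2 y3 y4 y5 : MvLaurent 5)
    (hy1 : y1 = ((x2 : MvLaurent 5) + (x5 : MvLaurent 5)) * ((x1⁻¹ : (MvLaurent 5)ˣ) : MvLaurent 5))
    (hy2 : y2 = ((x3 : MvLaurent 5) + (x1 : MvLaurent 5)) * ((x2⁻¹ : (MvLaurent 5)ˣ) : MvLaurent 5))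
    (hy3 : y3 = ((x4 : MvLaurent 5) + (x2 : MvLaurent 5)) * ((x3⁻¹ : (MvLaurent 5)ˣ) : MvLaurent 5))
    (hy4 : y4 = ((x5 : MvLaurent 5) + (x3 : MvLaurent 5)) * ((x4⁻¹ : (MvLaurent 5)ˣ) : MvLaurent 5))
    (hy5 : y5 = ((x1 : MvLaurent 5) + (x4 : MvLaurent 5)) * ((x5⁻¹ : (MvLaurent 5)ˣ) : MvLaurent 5)) :
    y1 * y2 * y3 * y4 * y5 - y1 * y2 * y3 - y1 * y2 * y5 - y2 * y3 * y4 - y3 * y4 * y5 - y1 * y4 * y5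
      + y1 + y2 + y3 + y4 + y5 = 2 :=
  cycle_relation_five_of_units x1 x2 x3 x4 x5 y1 y2 y3 y4 y5 hy1 hy2 hy3 hy4 hy5
end

section
/- Expanding the product ∏_{i=1}^k x_{v_i}^{-1}(p_{v_i}^+ + p_{v_i}^-) over the 2^k choices of sign gives: ∏ p_{v_i}^+/x_{v_i} + ∏ p_{v_i}^- /x_{v_i} + Σ over nonempty S ⊆ Z/kZ with S∩(S+1)=∅ of (-1)^{|S|+1} (∏_{i∈S} p_{v_i}^+ p_{v_{i+1}}^- /(x_{v_i} x_{v_{i+1}})) (∏_{i∉S∪(S+1)} x_{v_i}^{-1}(p_{v_i}^+ + p_{v_i}^-)). -/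
/-- The (invertible) variable `xᵢ` of the Laurent polynomial ring. -/
noncomputable def Xu {n : ℕ} (i : Fin n) : (MvLaurent n)ˣ :=
  Units.map (AddMonoidAlgebra.of ℤ (Fin n →₀ ℤ))
    (toUnits (Multiplicative.ofAdd (Finsupp.single i (1 : ℤ))))

/-- An ice quiver on `n` vertices. -/
structure IceQuiver (n : ℕ) where
  arrows : Fin n → Fin n → ℕ
  frozen : Fin n → Bool
  no_loops : ∀ i, arrows i i = 0
  no_two_cycles : ∀ i j, arrows i j = 0 ∨ arrows j i = 0

/-- `pᵢ⁺`, the product of `x_{target(a)}` over arrows `a` with source `i`. -/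
noncomputable def Pp {n : ℕ} (Q : IceQuiver n) (i : Fin n) : (MvLaurent n)ˣ :=
  ∏ j, (Xu j) ^ (Q.arrows i j)

/-- `pᵢ⁻`, the product of `x_{source(a)}` over arrows `a` with target `i`. -/
noncomputable def Pm {n : ℕ} (Q : IceQuiver n) (i : Fin n) : (MvLaurent n)ˣ :=
  ∏ j, (Xu j) ^ (Q.arrows j i)

/-- `xᵢ⁻¹(pᵢ⁺ + pᵢ⁻)`. -/
noncomputable def invTimesSum {n : ℕ} (Q : IceQuiver n) (i : Fin n) : MvLaurent n :=
  (((Xu i)⁻¹ : (MvLaurent n)ˣ) : MvLaurent n) * ((Pp Q i : MvLaurent n) + (Pm Q i : MvLaurent n))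

/-!
With `aᵢ = pᵢ⁺/xᵢ` and `bᵢ = pᵢ⁻/xᵢ`, the product `∏ (aᵢ + bᵢ)` is the sum of
`A T = ∏_{i ∈ T} aᵢ ∏_{i ∉ T} bᵢ` over all `T ⊆ ℤ/kℤ`. The term of the right-hand side indexed
by `S` (with `S ∩ (S + 1) = ∅`) expands to the sum of the `A T` with `S ⊆ T` and `(S + 1) ∩ T = ∅`,
that is, with `S` contained in the set `D(T)` of cyclic descents `i ∈ T, i + 1 ∉ T`. So `A T` is
counted `∑_{∅ ≠ S ⊆ D(T)} (-1)^{|S|+1}` times: once if `D(T) ≠ ∅`, never if `D(T) = ∅`, i.e. if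
`T = ∅` or `T = ℤ/kℤ`; these two missing terms are `∏ bᵢ` and `∏ aᵢ`.
-/

open Finset

theorem Finset.prod_mul_prod_mul_prod_add_compl {ι R : Type*} [Fintype ι] [DecidableEq ι]
    [CommSemiring R] (a b : ι → R) {P N : Finset ι} (hPN : Disjoint P N) :
    (∏ i ∈ P, a i) * (∏ i ∈ N, b i) * ∏ i ∈ (P ∪ N)ᶜ, (a i + b i)
      = ∑ T with P ⊆ T ∧ Disjoint N T, (∏ i ∈ T, a i) * ∏ i ∈ Tᶜ, b i := by
  -- both sides are the expansion of `∏ (f i + g i)`: `f` vanishes on `N` and `g` on `P`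
  set f : ι → R := fun i => if i ∉ N then a i else 0
  set g : ι → R := fun i => if i ∉ P then b i else 0
  have hpiece : (∏ i ∈ P, a i) * (∏ i ∈ N, b i) * ∏ i ∈ (P ∪ N)ᶜ, (a i + b i)
      = ∏ i, P.piecewise a (N.piecewise b (a + b)) i := by
    rw [prod_piecewise, univ_inter, ← compl_eq_univ_sdiff, prod_piecewise,
      inter_eq_right.mpr (subset_compl_iff_disjoint_left.mpr hPN), sdiff_eq_inter_compl,
      ← compl_union, mul_assoc]
    rfl
  have hfg : ∀ i, P.piecewise a (N.piecewise b (a + b)) i = f i + g i := by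
    intro i
    by_cases hP : i ∈ P
    · simp [f, g, hP, disjoint_left.mp hPN hP]
    · by_cases hN : i ∈ N <;> simp [f, g, hP, hN]
  rw [hpiece, prod_congr rfl fun i _ => hfg i, prod_add, powerset_univ, sum_filter]
  refine sum_congr rfl fun T _ => ?_
  simp only [f, g, prod_ite_zero, ite_zero_mul_ite_zero, ← compl_eq_univ_sdiff, mem_compl,
    not_imp_not, ← disjoint_right]
  exact if_congr and_comm rfl rfl

theorem Finset.sum_powerset_filter_nonempty_neg_one_pow_succ_card {α R : Type*} [DecidableEq α]
    [Ring R] (s : Finset α) :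
    ∑ S ∈ s.powerset with S.Nonempty, (-1 : R) ^ (#S + 1) = if s = ∅ then 0 else 1 := by
  have htotal : ∑ S ∈ s.powerset, (-1 : R) ^ (#S + 1) = -(if s = ∅ then 1 else 0) := by
    have := congrArg (Int.cast : ℤ → R) (sum_powerset_neg_one_pow_card (x := s))
    push_cast at this
    simp_rw [pow_succ, mul_neg_one, sum_neg_distrib, this]
  have hempty : {S ∈ s.powerset | ¬S.Nonempty} = {∅} := by
    ext S
    simp only [mem_filter, mem_powerset, not_nonempty_iff_eq_empty, mem_singleton]
    exact ⟨And.right, fun h => ⟨h ▸ empty_subset s, h⟩⟩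
  rw [← sum_filter_add_sum_filter_not s.powerset (·.Nonempty), hempty, sum_singleton] at htotal
  rw [eq_sub_of_add_eq htotal]
  split_ifs <;> simp

open Fin.NatCast in
theorem Fin.eq_univ_of_add_one_mem {k : ℕ} [NeZero k] {T : Finset (Fin k)} (hT : T.Nonempty)
    (h : ∀ i ∈ T, i + 1 ∈ T) : T = univ := by
  obtain ⟨i₀, hi₀⟩ := hT
  have hshift : ∀ m : ℕ, i₀ + (m : Fin k) ∈ T := by
    intro m
    induction m with
    | zero => simpa using hi₀
    | succ m ih => simpa [Nat.cast_succ, ← add_assoc] using h _ ih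
  refine eq_univ_of_forall fun j => ?_
  simpa using hshift (j - i₀).val

section Cyclic

variable {k : ℕ} [NeZero k]

def cyclicDescents (T : Finset (Fin k)) : Finset (Fin k) := {i ∈ T | i + 1 ∉ T}

theorem cyclicDescents_eq_empty_iff {T : Finset (Fin k)} :
    cyclicDescents T = ∅ ↔ T = ∅ ∨ T = univ := by
  constructor
  · intro h
    refine T.eq_empty_or_nonempty.imp_right fun hT => Fin.eq_univ_of_add_one_mem hT fun i hi => ?_
    by_contra hi'
    have hdesc : i ∈ cyclicDescents T := mem_filter.mpr ⟨hi, hi'⟩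
    simp [h] at hdesc
  · rintro (rfl | rfl) <;> simp [cyclicDescents]

theorem subset_cyclicDescents_iff {S T : Finset (Fin k)} :
    S ⊆ cyclicDescents T ↔ S ⊆ T ∧ Disjoint (S.image (· + 1)) T := by
  simp only [cyclicDescents, subset_iff, mem_filter, disjoint_right, mem_image]
  constructor
  · intro h
    refine ⟨fun i hi => (h hi).1, ?_⟩
    rintro _ hT ⟨i, hi, rfl⟩
    exact (h hi).2 hT
  · rintro ⟨hST, hdesc⟩ i hi
    exact ⟨hST hi, fun hi1 => hdesc hi1 ⟨i, hi, rfl⟩⟩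

theorem Fin.prod_mul_prod_add_compl_eq_sum {R : Type*} [CommSemiring R] (a b : Fin k → R)
    {S : Finset (Fin k)} (hS : ∀ i ∈ S, i + 1 ∉ S) :
    (∏ i ∈ S, a i * b (i + 1)) * ∏ i ∈ (S ∪ S.image (· + 1))ᶜ, (a i + b i)
      = ∑ T with S ⊆ cyclicDescents T, (∏ i ∈ T, a i) * ∏ i ∈ Tᶜ, b i := by
  have hdisj : Disjoint S (S.image (· + 1)) := by
    refine disjoint_left.mpr fun i hi hi' => ?_
    obtain ⟨j, hj, rfl⟩ := mem_image.mp hi'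
    exact hS j hj hi
  simp_rw [subset_cyclicDescents_iff]
  rw [prod_mul_distrib, ← prod_image (g := (· + 1)) fun i _ j _ => add_right_cancel,
    prod_mul_prod_mul_prod_add_compl a b hdisj]

theorem Fin.prod_add_eq_cyclic_expansion {R : Type*} [CommRing R] (a b : Fin k → R) :
    ∏ i, (a i + b i)
      = (∏ i, a i) + (∏ i, b i)
        + ∑ S ∈ univ.filter (fun S : Finset (Fin k) => S.Nonempty ∧ ∀ i ∈ S, i + 1 ∉ S),
            (-1 : R) ^ (#S + 1) * (∏ i ∈ S, a i * b (i + 1)) *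
              ∏ i ∈ (S ∪ S.image (· + 1))ᶜ, (a i + b i) := by
  set A : Finset (Fin k) → R := fun T => (∏ i ∈ T, a i) * ∏ i ∈ Tᶜ, b i
  have hexpand : ∏ i, (a i + b i) = ∑ T, A T := by
    rw [prod_add, powerset_univ]
    simp_rw [← compl_eq_univ_sdiff]
    rfl
  have hswap : ∑ S ∈ univ.filter (fun S : Finset (Fin k) => S.Nonempty ∧ ∀ i ∈ S, i + 1 ∉ S),
        (-1 : R) ^ (#S + 1) * (∏ i ∈ S, a i * b (i + 1)) *
          ∏ i ∈ (S ∪ S.image (· + 1))ᶜ, (a i + b i)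
      = ∑ T, (∑ S ∈ (cyclicDescents T).powerset with S.Nonempty, (-1 : R) ^ (#S + 1)) * A T := by
    rw [sum_congr rfl fun S hS => by
      rw [mul_assoc, Fin.prod_mul_prod_add_compl_eq_sum a b (mem_filter.mp hS).2.2]]
    simp_rw [mul_sum, sum_mul]
    refine sum_comm' fun S T => ?_
    simp only [mem_filter, mem_univ, mem_powerset, true_and, and_true]
    refine ⟨fun ⟨⟨hne, _⟩, hST⟩ => ⟨hST, hne⟩, fun ⟨hST, hne⟩ => ⟨⟨hne, fun i hi hi1 => ?_⟩, hST⟩⟩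
    exact (mem_filter.mp (hST hi)).2 (mem_filter.mp (hST hi1)).1
  have hcount : ∑ T, (if cyclicDescents T = ∅ then 0 else 1) * A T = ∑ T, A T - A ∅ - A univ := by
    have hpair : univ.filter (fun T : Finset (Fin k) => T = ∅ ∨ T = univ) = {∅, univ} := by
      ext T; simp
    have hsplit := sum_filter_add_sum_filter_not univ (fun T => T = ∅ ∨ T = univ) A
    rw [hpair, sum_pair univ_nonempty.ne_empty.symm, sum_filter] at hsplit
    simp_rw [ite_not] at hsplit
    simp_rw [cyclicDescents_eq_empty_iff, ite_mul, zero_mul, one_mul]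
    rw [← hsplit]
    ring
  rw [hexpand, hswap]
  simp_rw [sum_powerset_filter_nonempty_neg_one_pow_succ_card, hcount]
  simp only [A, compl_empty, compl_univ, prod_empty, one_mul, mul_one]
  ring

end Cyclic

theorem product_expansion_general {n k : ℕ} [NeZero k] (Q : IceQuiver n) (v : Fin k → Fin n) :
    ∏ i : Fin k, invTimesSum Q (v i)
      = ((∏ i : Fin k, (Pp Q (v i) * (Xu (v i))⁻¹ : (MvLaurent n)ˣ) :
            (MvLaurent n)ˣ) : MvLaurent n)
        + ((∏ i : Fin k, (Pm Q (v i) * (Xu (v i))⁻¹ : (MvLaurent n)ˣ) :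
            (MvLaurent n)ˣ) : MvLaurent n)
        + ∑ S ∈ Finset.univ.filter
            (fun S : Finset (Fin k) => S.Nonempty ∧ ∀ i ∈ S, i + 1 ∉ S),
            (-1 : MvLaurent n) ^ (S.card + 1) *
              ((∏ i ∈ S,
                (Pp Q (v i) * Pm Q (v (i + 1)) * (Xu (v i))⁻¹ * (Xu (v (i + 1)))⁻¹ :
                  (MvLaurent n)ˣ) : (MvLaurent n)ˣ) : MvLaurent n) *
              (∏ i ∈ (S ∪ S.image (· + 1))ᶜ, invTimesSum Q (v i)) := by
  let a : Fin k → MvLaurent n := fun i => ↑(Pp Q (v i) * (Xu (v i))⁻¹)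
  let b : Fin k → MvLaurent n := fun i => ↑(Pm Q (v i) * (Xu (v i))⁻¹)
  have hsum : ∀ i, invTimesSum Q (v i) = a i + b i := fun i => by
    simp only [invTimesSum, a, b, Units.val_mul]
    ring
  have hcross : ∀ i, ((Pp Q (v i) * Pm Q (v (i + 1)) * (Xu (v i))⁻¹ * (Xu (v (i + 1)))⁻¹ :
      (MvLaurent n)ˣ) : MvLaurent n) = a i * b (i + 1) := fun i => by
    simp only [a, b, Units.val_mul]
    ring
  simp only [Units.coe_prod, hsum, hcross]
  exact Fin.prod_add_eq_cyclic_expansion a b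

/-- Expanding the product `∏_{i=1}^k x_{vᵢ}⁻¹(p⁺_{vᵢ} + p⁻_{vᵢ})` over the `2^k` choices
of sign gives
`∏ p⁺_{vᵢ}/x_{vᵢ} + ∏ p⁻_{vᵢ}/x_{vᵢ} + ∑_{∅ ≠ S ⊆ ℤ/kℤ, S∩(S+1)=∅} (-1)^{|S|+1}
  (∏_{i∈S} p⁺_{vᵢ}p⁻_{v_{i+1}}/(x_{vᵢ}x_{v_{i+1}})) (∏_{i∉S∪(S+1)} x_{vᵢ}⁻¹(p⁺_{vᵢ}+p⁻_{vᵢ}))`. -/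
theorem product_expansion {n k : ℕ} [NeZero k] (Q : IceQuiver n) (v : Fin k → Fin n)
    (hcycle : ∀ i : Fin k, 0 < Q.arrows (v i) (v (i + 1)))
    (hunfrozen : ∀ i : Fin k, Q.frozen (v i) = false) :
    ∏ i : Fin k, invTimesSum Q (v i)
      = ((∏ i : Fin k, (Pp Q (v i) * (Xu (v i))⁻¹ : (MvLaurent n)ˣ) :
            (MvLaurent n)ˣ) : MvLaurent n)
        + ((∏ i : Fin k, (Pm Q (v i) * (Xu (v i))⁻¹ : (MvLaurent n)ˣ) :
            (MvLaurent n)ˣ) : MvLaurent n)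
        + ∑ S ∈ Finset.univ.filter
            (fun S : Finset (Fin k) => S.Nonempty ∧ ∀ i ∈ S, i + 1 ∉ S),
            (-1 : MvLaurent n) ^ (S.card + 1) *
              ((∏ i ∈ S,
                (Pp Q (v i) * Pm Q (v (i + 1)) * (Xu (v i))⁻¹ * (Xu (v (i + 1)))⁻¹ :
                  (MvLaurent n)ˣ) : (MvLaurent n)ˣ) : MvLaurent n) *
              (∏ i ∈ (S ∪ S.image (· + 1))ᶜ, invTimesSum Q (v i)) :=
  product_expansion_general Q v
end

section
/- Every vertex y_i of Δ(S,𝒞,Y) is a shedding vertex: no face of the link of y_i is a facet of the deletion of y_i. -/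
/-!
If `F` lies in the link of `yᵢ`, then `F ∪ {yᵢ}` is a face, so `xᵢ ∉ F`. Adding `xᵢ` to `F`
violates none of the defining conditions (`i ∈ Y ⊆ S`, `yᵢ ∉ F`, and the sets in `𝒞` only
constrain `y`-vertices), so `F ∪ {xᵢ}` is a strictly larger face of the deletion of `yᵢ`.
-/

open Sum

/-- Faces of the simplicial complex `Δ(S,𝒞,Y)` on vertex set
`{xᵢ : i ∈ S} ∪ {yᵢ : i ∈ Y}` (encoded inside `Fin n ⊕ Fin n`). -/
def DFace (n : ℕ) (S : Finset (Fin n)) (𝒞 : Set (Finset (Fin n))) (Y : Finset (Fin n))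
    (F : Finset (Fin n ⊕ Fin n)) : Prop :=
  (∀ i : Fin n, inl i ∈ F → i ∈ S) ∧
  (∀ i : Fin n, inr i ∈ F → i ∈ Y) ∧
  (∀ i : Fin n, ¬(inl i ∈ F ∧ inr i ∈ F)) ∧
  (∀ C ∈ 𝒞, C ⊆ Y → ¬(C.image inr ⊆ F))

section DFace

variable {n : ℕ} {S : Finset (Fin n)} {𝒞 : Set (Finset (Fin n))} {Y : Finset (Fin n)}
  {F : Finset (Fin n ⊕ Fin n)} {i : Fin n}

theorem DFace.mem_Y_of_inr_mem (hF : DFace n S 𝒞 Y F) (hi : inr i ∈ F) : i ∈ Y :=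
  hF.2.1 i hi

theorem DFace.inl_notMem_of_insert_inr (hF : DFace n S 𝒞 Y (insert (inr i) F)) : inl i ∉ F :=
  fun hx => hF.2.2.1 i ⟨Finset.mem_insert_of_mem hx, Finset.mem_insert_self _ _⟩

theorem DFace.insert_inl (hF : DFace n S 𝒞 Y F) (hiS : i ∈ S) (hyi : inr i ∉ F) :
    DFace n S 𝒞 Y (insert (inl i) F) := by
  obtain ⟨hS, hY, hxy, h𝒞⟩ := hF
  refine ⟨fun j hj => ?_, fun j hj => ?_, fun j ⟨hx, hy⟩ => ?_, fun C hC hCY hsub => ?_⟩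
  · rcases Finset.mem_insert.mp hj with h | h
    · rwa [inl.inj h]
    · exact hS j h
  · exact hY j (Finset.mem_of_mem_insert_of_ne hj inr_ne_inl)
  · have hyF : inr j ∈ F := Finset.mem_of_mem_insert_of_ne hy inr_ne_inl
    rcases Finset.mem_insert.mp hx with h | h
    · exact hyi (inl.inj h ▸ hyF)
    · exact hxy j ⟨h, hyF⟩
  · have hx : inl i ∉ C.image inr := by simp
    exact h𝒞 C hC hCY ((Finset.subset_insert_iff_of_notMem hx).mp hsub)

end DFace

theorem y_vertex_is_shedding_general (n : ℕ) (S : Finset (Fin n)) (𝒞 : Set (Finset (Fin n)))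
    (Y : Finset (Fin n)) (hYS : Y ⊆ S)
    (i : Fin n) (F : Finset (Fin n ⊕ Fin n))
    (hlink : inr i ∉ F ∧ DFace n S 𝒞 Y F ∧ DFace n S 𝒞 Y (insert (inr i) F)) :
    ¬((DFace n S 𝒞 Y F ∧ inr i ∉ F) ∧
      ∀ G : Finset (Fin n ⊕ Fin n), (DFace n S 𝒞 Y G ∧ inr i ∉ G) → F ⊆ G → F = G) := by
  rintro ⟨-, hmax⟩
  obtain ⟨hyi, hF, hFy⟩ := hlink
  have hiS : i ∈ S := hYS (hFy.mem_Y_of_inr_mem (Finset.mem_insert_self _ _))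
  have hxi : inl i ∉ F := hFy.inl_notMem_of_insert_inr
  have hyi_ins : inr i ∉ insert (inl i) F := by simpa using hyi
  have hFx := hmax _ ⟨hF.insert_inl hiS hyi, hyi_ins⟩ (Finset.subset_insert _ _)
  exact (Finset.ssubset_insert hxi).ne hFx

/-- Every vertex `yᵢ` of `Δ(S,𝒞,Y)` is a shedding vertex: no face of the link of `yᵢ`
is a facet (maximal face) of the deletion of `yᵢ`. -/
theorem y_vertex_is_shedding (n : ℕ) (S : Finset (Fin n)) (𝒞 : Set (Finset (Fin n)))
    (Y : Finset (Fin n)) (hYS : Y ⊆ S) (h𝒞S : ∀ C ∈ 𝒞, C ⊆ S)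
    (i : Fin n) (hiY : i ∈ Y) (hi𝒞 : ({i} : Finset (Fin n)) ∉ 𝒞)
    (F : Finset (Fin n ⊕ Fin n))
    (hlink : inr i ∉ F ∧ DFace n S 𝒞 Y F ∧ DFace n S 𝒞 Y (insert (inr i) F)) :
    ¬((DFace n S 𝒞 Y F ∧ inr i ∉ F) ∧
      ∀ G : Finset (Fin n ⊕ Fin n), (DFace n S 𝒞 Y G ∧ inr i ∉ G) → F ⊆ G → F = G) :=
  y_vertex_is_shedding_general n S 𝒞 Y hYS i F hlink
end

section
/- Let K be an algebraically closed field and let V_n ⊆ K^{2n} be the variety cut out by the equations y1x1 = x2 + 1, y_i x_i = x_{i+1} + x_{i-1} for 2 ≤ i ≤ n-1, and y_n x_n = 1 + x_{n-1}. Then for any point p of V_n, the values x_i(p) and x_{i+1}(p) are not both zero, for every 1 ≤ i ≤ n-1. -/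
/-!
The middle equations `yᵢxᵢ = x_{i+1} + x_{i-1}` form a three-term recurrence, so two consecutive
zeros `xᵢ = x_{i+1} = 0` force `x_{i-1} = 0`. Descending, `x₁ = x₂ = 0`, which contradicts
`y₁x₁ = x₂ + 1`.
-/

theorem zero_of_recurrence_of_consecutive_zero {R : Type*} [NonUnitalNonAssocSemiring R]
    {x y : ℕ → R} {i : ℕ} (hrec : y (i + 1) * x (i + 1) = x (i + 2) + x i)
    (hi₁ : x (i + 1) = 0) (hi₂ : x (i + 2) = 0) : x i = 0 := by
  simpa [hi₁, hi₂] using hrec.symm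

theorem consecutive_zero_descend {R : Type*} [NonUnitalNonAssocSemiring R]
    {x y : ℕ → R} {m : ℕ} (hrec : ∀ i, 2 ≤ i → i ≤ m → y i * x i = x (i + 1) + x (i - 1)) :
    ∀ i, 1 ≤ i → i ≤ m → x i = 0 → x (i + 1) = 0 → x 1 = 0 ∧ x 2 = 0 := by
  intro i hi
  induction i, hi using Nat.le_induction with
  | base => exact fun _ h₁ h₂ => ⟨h₁, h₂⟩
  | succ i hi ih =>
    intro him hi₁ hi₂
    have hprev : x i = 0 :=
      zero_of_recurrence_of_consecutive_zero (hrec (i + 1) (by omega) him) hi₁ hi₂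
    exact ih (by omega) hprev hi₁

theorem consecutive_not_both_zero_general (K : Type*) [Field K]
    (n : ℕ) (x y : ℕ → K)
    (h1 : y 1 * x 1 = x 2 + 1)
    (hmid : ∀ i, 2 ≤ i → i ≤ n - 1 → y i * x i = x (i + 1) + x (i - 1)) :
    ∀ i, 1 ≤ i → i ≤ n - 1 → ¬(x i = 0 ∧ x (i + 1) = 0) := by
  rintro i hi hin ⟨hi₁, hi₂⟩
  obtain ⟨hx₁, hx₂⟩ := consecutive_zero_descend hmid i hi hin hi₁ hi₂
  simp [hx₁, hx₂] at h1

/-- On the lower bound variety of the linear `Aₙ` quiver `1 → 2 → ⋯ → n` over an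
algebraically closed field (cut out by `y₁x₁ = x₂ + 1`, `yᵢxᵢ = x_{i+1} + x_{i-1}`
for `2 ≤ i ≤ n-1`, and `yₙxₙ = 1 + x_{n-1}`), at every point the values `xᵢ` and
`x_{i+1}` are not both zero, for every `1 ≤ i ≤ n-1`. -/
theorem consecutive_not_both_zero (K : Type*) [Field K] [IsAlgClosed K]
    (n : ℕ) (hn : 2 ≤ n) (x y : ℕ → K)
    (h1 : y 1 * x 1 = x 2 + 1)
    (hmid : ∀ i, 2 ≤ i → i ≤ n - 1 → y i * x i = x (i + 1) + x (i - 1))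
    (hlast : y n * x n = 1 + x (n - 1)) :
    ∀ i, 1 ≤ i → i ≤ n - 1 → ¬(x i = 0 ∧ x (i + 1) = 0) :=
  consecutive_not_both_zero_general K n x y h1 hmid
end

section
/- Let Δ be a simplicial complex on vertex set {x1,x2,x3,y1,y2,y3} whose faces are all subsets F with {xi,yi} ⊄ F for each i and {y1,y2,y3} ⊄ F. Then the geometric realization of Δ is homeomorphic to a closed 2-dimensional disk. -/
open Sum

/-- Faces of the Stanley–Reisner complex of `⟨x₁y₁, x₂y₂, x₃y₃, y₁y₂y₃⟩`: subsets of
`{x₁,x₂,x₃,y₁,y₂,y₃}` (encoded as `Fin 3 ⊕ Fin 3`) containing no pair `{xᵢ,yᵢ}` and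
not containing `{y₁,y₂,y₃}`. -/
def IsFace (F : Finset (Fin 3 ⊕ Fin 3)) : Prop :=
  (∀ i : Fin 3, ¬(inl i ∈ F ∧ inr i ∈ F)) ∧
    ¬(({inr 0, inr 1, inr 2} : Finset (Fin 3 ⊕ Fin 3)) ⊆ F)

open scoped Classical in
/-- The geometric realization of the complex: convex combinations of the vertices
whose support is a face. -/
noncomputable def realization : Set ((Fin 3 ⊕ Fin 3) → ℝ) :=
  {w | (∀ v, 0 ≤ w v) ∧ (∑ v, w v = 1) ∧
    IsFace (Finset.univ.filter fun v => w v ≠ 0)}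

/-!
Without the condition on `{y₁,y₂,y₃}`, `Δ` would be the boundary of the octahedron with
antipodal vertices `xᵢ, yᵢ`; removing that open facet leaves a disk, which we flatten onto a
triangle (a Schlegel diagram). Place `yᵢ` at `eᵢ` and `xᵢ` at `-eᵢ/3` in `ℝ³` and project along
`(1,1,1)`. A point of `Δ` is recovered from its image `b ∈ ℝ³` (weight `bᵢ⁺` on `yᵢ`, `3bᵢ⁻` on
`xᵢ`), and `b` lies on the level set `∑ max (bᵢ, -3bᵢ) = 1` with some `bᵢ ≤ 0`. Translating `b` by
`d(1,1,1)`, `d > 0`, keeping some coordinate `≤ 0` lowers that sum by at least `3d - 2d`, so the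
projection is injective; an intermediate value argument shows that its image is the triangle
spanned by the images of the `yᵢ`. A continuous bijection from the compact realization onto
this compact convex set with interior is a homeomorphism, and such a set is a closed disk.
-/

namespace StanleyReisnerDisk

lemma mem_realization_iff {w : (Fin 3 ⊕ Fin 3) → ℝ} :
    w ∈ realization ↔ (∀ v, 0 ≤ w v) ∧ ∑ v, w v = 1 ∧
      (∀ i, w (inl i) = 0 ∨ w (inr i) = 0) ∧ ∃ i, w (inr i) = 0 := by
  simp only [realization, IsFace, Set.mem_ofPred_eq, Finset.mem_filter, Finset.mem_univ, true_and,
    Finset.insert_subset_iff, Finset.singleton_subset_iff, Fin.exists_fin_succ]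
  grind

lemma isCompact_realization : IsCompact realization := by
  have h : realization = stdSimplex ℝ (Fin 3 ⊕ Fin 3) ∩
      ((⋂ i, {w | w (inl i) * w (inr i) = 0}) ∩ {w | ∏ i, w (inr i) = 0}) := by
    ext w
    simp only [mem_realization_iff, stdSimplex, Set.mem_inter_iff, Set.mem_iInter,
      Set.mem_ofPred_eq, mul_eq_zero, Finset.prod_eq_zero_iff, Finset.mem_univ, true_and]
    tauto
  rw [h]
  exact (isCompact_stdSimplex _ _).inter_right <|
    (isClosed_iInter fun i => isClosed_eq (by fun_prop) continuous_const).inter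
      (isClosed_eq (by fun_prop) continuous_const)

def tent (x : ℝ) : ℝ := max x (-3 * x)

lemma tent_nonneg (x : ℝ) : 0 ≤ tent x := by
  unfold tent; grind

lemma tent_add_le (x : ℝ) {d : ℝ} (hd : 0 ≤ d) : tent (x + d) ≤ tent x + d := by
  unfold tent; grind

lemma tent_add_of_add_nonpos {x d : ℝ} (hd : 0 ≤ d) (h : x + d ≤ 0) :
    tent (x + d) = tent x - 3 * d := by
  unfold tent; grind

lemma sum_tent_add_lt {b : Fin 3 → ℝ} {d : ℝ} (hd : 0 < d) {j : Fin 3} (hj : b j + d ≤ 0) :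
    ∑ i, tent (b i + d) < ∑ i, tent (b i) := by
  have hdrop := tent_add_of_add_nonpos hd.le hj
  have := tent_add_le (b 0) hd.le
  have := tent_add_le (b 1) hd.le
  have := tent_add_le (b 2) hd.le
  simp only [Fin.sum_univ_three]
  fin_cases j <;> simp only [Fin.zero_eta, Fin.mk_one, Fin.reduceFinMk] at hdrop <;> linarith

noncomputable def height (w : (Fin 3 ⊕ Fin 3) → ℝ) (i : Fin 3) : ℝ :=
  w (inr i) - w (inl i) / 3

noncomputable def ofHeight (b : Fin 3 → ℝ) : (Fin 3 ⊕ Fin 3) → ℝ :=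
  Sum.elim (fun i => 3 * max (-b i) 0) (fun i => max (b i) 0)

def heightSet : Set (Fin 3 → ℝ) := {b | ∑ i, tent (b i) = 1 ∧ ∃ i, b i ≤ 0}

lemma height_ofHeight (b : Fin 3 → ℝ) : height (ofHeight b) = b := by
  funext i
  simp only [height, ofHeight, elim_inl, elim_inr]
  grind

lemma ofHeight_height {w : (Fin 3 ⊕ Fin 3) → ℝ} (hw : w ∈ realization) :
    ofHeight (height w) = w := by
  obtain ⟨hnn, -, hface, -⟩ := mem_realization_iff.1 hw
  funext v
  rcases v with i | i <;> have := hnn (inl i) <;> have := hnn (inr i) <;>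
    rcases hface i with h | h <;> simp only [ofHeight, height, elim_inl, elim_inr, h] <;> grind

lemma ofHeight_mem_realization_iff {b : Fin 3 → ℝ} : ofHeight b ∈ realization ↔ b ∈ heightSet := by
  have hsum : ∑ v, ofHeight b v = ∑ i, tent (b i) := by
    rw [Fintype.sum_sum_type, ← Finset.sum_add_distrib]
    exact Finset.sum_congr rfl fun i _ => by simp only [ofHeight, elim_inl, elim_inr, tent]; grind
  have hnn : ∀ v, 0 ≤ ofHeight b v := by
    rintro (i | i) <;> simp only [ofHeight, elim_inl, elim_inr] <;> positivity
  have hface : ∀ i, ofHeight b (inl i) = 0 ∨ ofHeight b (inr i) = 0 := by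
    intro i; simp only [ofHeight, elim_inl, elim_inr]; grind
  have hy : ∀ i, ofHeight b (inr i) = 0 ↔ b i ≤ 0 := fun i => max_eq_right_iff
  rw [mem_realization_iff, hsum]
  simp only [heightSet, Set.mem_ofPred_eq, ← hy, hnn, hface, implies_true, true_and]

lemma height_mem_heightSet {w : (Fin 3 ⊕ Fin 3) → ℝ} (hw : w ∈ realization) :
    height w ∈ heightSet :=
  ofHeight_mem_realization_iff.1 ((ofHeight_height hw).symm ▸ hw)

lemma eq_zero_of_forall_eq_add {b b' : Fin 3 → ℝ} {d : ℝ} (hb : b ∈ heightSet)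
    (hb' : b' ∈ heightSet) (h : ∀ i, b' i = b i + d) : d = 0 := by
  wlog hd : 0 ≤ d generalizing b b' d
  · exact neg_eq_zero.mp (this hb' hb (fun i => by rw [h]; ring) (by linarith))
  obtain ⟨j, hj⟩ := hb'.2
  by_contra hne
  have := sum_tent_add_lt (lt_of_le_of_ne hd (Ne.symm hne)) ((h j).symm.trans_le hj)
  simp only [← h] at this
  linarith [hb.1, hb'.1]

noncomputable def schlegel (w : (Fin 3 ⊕ Fin 3) → ℝ) : EuclideanSpace ℝ (Fin 2) :=
  !₂[height w 0 - height w 2, height w 1 - height w 2]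

lemma continuous_schlegel : Continuous schlegel := by
  unfold schlegel height; fun_prop

lemma injOn_schlegel : Set.InjOn schlegel realization := by
  intro w hw w' hw' heq
  have h0 : height w 0 - height w 2 = height w' 0 - height w' 2 := congrArg (· 0) heq
  have h1 : height w 1 - height w 2 = height w' 1 - height w' 2 := congrArg (· 1) heq
  have hshift : ∀ i, height w' i = height w i + (height w' 2 - height w 2) := by
    intro i
    fin_cases i <;> simp only [Fin.zero_eta, Fin.mk_one, Fin.reduceFinMk] <;> linarith
  have hd := eq_zero_of_forall_eq_add (height_mem_heightSet hw) (height_mem_heightSet hw') hshift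
  rw [← ofHeight_height hw, ← ofHeight_height hw']
  congr 1
  funext i
  linarith [hshift i]

def triangle : Set (EuclideanSpace ℝ (Fin 2)) :=
  {z | z 0 + z 1 ≤ 1 ∧ z 1 - 2 * z 0 ≤ 1 ∧ z 0 - 2 * z 1 ≤ 1}

lemma schlegel_mem_triangle {w : (Fin 3 ⊕ Fin 3) → ℝ} (hw : w ∈ realization) :
    schlegel w ∈ triangle := by
  obtain ⟨hnn, hsum, -, -⟩ := mem_realization_iff.1 hw
  simp only [Fintype.sum_sum_type, Fin.sum_univ_three] at hsum
  have := hnn (inl 0); have := hnn (inl 1); have := hnn (inl 2)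
  have := hnn (inr 0); have := hnn (inr 1); have := hnn (inr 2)
  refine ⟨?_, ?_, ?_⟩ <;> simp only [schlegel, height, Matrix.cons_val_zero, Matrix.cons_val_one,
    Matrix.cons_val_fin_one] <;> linarith

lemma triangle_subset_image_schlegel : triangle ⊆ schlegel '' realization := by
  rintro z ⟨h₁, h₂, h₃⟩
  set c : Fin 3 → ℝ := ![z 0, z 1, 0]
  obtain ⟨j, hj⟩ := Finite.exists_min c
  set G : ℝ → ℝ := fun s => ∑ i, tent (c i + s)
  have hG : Continuous G := by simp only [G, tent]; fun_prop
  have hGtop : G (-c j) ≤ 1 := by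
    have : ∀ i, tent (c i + -c j) = c i - c j := fun i => by unfold tent; grind [hj i]
    simp only [G, this, Fin.sum_univ_three]
    fin_cases j <;> simp only [c, Fin.zero_eta, Fin.mk_one, Fin.reduceFinMk, Matrix.cons_val_zero,
      Matrix.cons_val_one, Matrix.cons_val] <;> linarith
  have hGbot : 1 ≤ G (-c j - 1) :=
    calc 1 ≤ tent (c j + (-c j - 1)) := by unfold tent; grind
      _ ≤ G (-c j - 1) := Finset.single_le_sum (f := fun i => tent (c i + (-c j - 1)))
          (fun i _ => tent_nonneg _) (Finset.mem_univ j)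
  obtain ⟨s, hs, hGs⟩ :=
    intermediate_value_Icc' (by linarith : -c j - 1 ≤ -c j) hG.continuousOn ⟨hGtop, hGbot⟩
  refine ⟨ofHeight fun i => c i + s,
    ofHeight_mem_realization_iff.2 ⟨hGs, j, by linarith [hs.2]⟩, ?_⟩
  rw [schlegel, height_ofHeight]
  ext i
  fin_cases i <;> simp [c]

lemma image_schlegel : schlegel '' realization = triangle :=
  (Set.image_subset_iff.2 fun _ => schlegel_mem_triangle).antisymm triangle_subset_image_schlegel

lemma convex_triangle : Convex ℝ triangle := by
  rintro x ⟨hx₁, hx₂, hx₃⟩ y ⟨hy₁, hy₂, hy₃⟩ a b ha hb hab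
  simp only [triangle, Set.mem_ofPred_eq, PiLp.add_apply, PiLp.smul_apply, smul_eq_mul]
  refine ⟨?_, ?_, ?_⟩ <;> nlinarith

lemma zero_mem_interior_triangle : (0 : EuclideanSpace ℝ (Fin 2)) ∈ interior triangle := by
  have hopen : IsOpen {z : EuclideanSpace ℝ (Fin 2) |
      z 0 + z 1 < 1 ∧ z 1 - 2 * z 0 < 1 ∧ z 0 - 2 * z 1 < 1} := by
    simp only [Set.ofPred_and]
    refine (isOpen_lt ?_ ?_).inter ((isOpen_lt ?_ ?_).inter (isOpen_lt ?_ ?_)) <;> fun_prop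
  refine interior_maximal ?_ hopen (by norm_num)
  rintro z ⟨h₁, h₂, h₃⟩
  exact ⟨h₁.le, h₂.le, h₃.le⟩

end StanleyReisnerDisk

open StanleyReisnerDisk

/-- The geometric realization of the Stanley–Reisner complex of
`⟨x₁y₁, x₂y₂, x₃y₃, y₁y₂y₃⟩` is homeomorphic to a closed 2-dimensional disk. -/
theorem realization_homeomorphic_disk :
    Nonempty (realization ≃ₜ (Metric.closedBall (0 : EuclideanSpace ℝ (Fin 2)) 1)) := by
  have hK : IsCompact triangle := image_schlegel ▸ isCompact_realization.image continuous_schlegel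
  obtain ⟨h, -, hdisk, -⟩ := exists_homeomorph_image_interior_closure_frontier_eq_unitBall
    convex_triangle ⟨0, zero_mem_interior_triangle⟩ hK.isBounded
  rw [hK.isClosed.closure_eq] at hdisk
  have : CompactSpace realization := isCompact_iff_compactSpace.mp isCompact_realization
  have hbij : Set.BijOn schlegel realization triangle :=
    image_schlegel ▸ injOn_schlegel.bijOn_image
  let e : realization ≃ₜ triangle := Continuous.homeoOfEquivCompactToT2 (f := hbij.equiv)
    (continuous_induced_rng.2 (continuous_schlegel.comp continuous_subtype_val))
  exact ⟨e.trans ((h.image triangle).trans (Homeomorph.setCongr hdisk))⟩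
end
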